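/- For nonzero x, x̃ ∈ ℝ³, the Frobenius norm of σ(x) - σ(x̃) satisfies ‖σ(x) - σ(x̃)‖² ≤ 2 | |x|^{γ/2} x - |x̃|^{γ/2} x̃ |². -/

import Mathlib

noncomputable def norm3 (x : Fin 3 → ℝ) : ℝ := Real.sqrt (∑ i, (x i)^2)

noncomputable def dot3 (x y : Fin 3 → ℝ) : ℝ := ∑ i, x i * y i

noncomputable def projM (x : Fin 3 → ℝ) : Matrix (Fin 3) (Fin 3) ℝ :=
  1 - (norm3 x ^ 2)⁻¹ • Matrix.of (fun i j => x i * x j)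

noncomputable def sigmaM (γ : ℝ) (x : Fin 3 → ℝ) : Matrix (Fin 3) (Fin 3) ℝ :=
  norm3 x ^ (1 + γ/2) • projM x

noncomputable def frob2 (A : Matrix (Fin 3) (Fin 3) ℝ) : ℝ := Matrix.trace (A * A.transpose)

noncomputable def minner (A B : Matrix (Fin 3) (Fin 3) ℝ) : ℝ := Matrix.trace (A * B.transpose)

noncomputable def bfun (γ : ℝ) (x : Fin 3 → ℝ) : Fin 3 → ℝ := (-2 * norm3 x ^ γ) • x

/-!
Write `P_x = I - x xᵀ/|x|²`, `a = |x|^{1+γ/2}`, `b = |y|^{1+γ/2}` and `c` for the cosine of the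
angle between `x` and `y`. Since `⟨P_x, P_y⟩ = 1 + c²` (so `‖P_x‖² = 2`), the left side is
`2a² + 2b² - 2ab(1 + c²)`, while the right side is `2(a² + b² - 2abc)`; their difference is
`2ab(1 - c)² ≥ 0`.
-/

lemma norm3_sq (x : Fin 3 → ℝ) : norm3 x ^ 2 = dot3 x x := by
  rw [norm3, Real.sq_sqrt (Finset.sum_nonneg fun i _ => sq_nonneg (x i)), dot3]
  simp only [sq]

lemma norm3_pos {x : Fin 3 → ℝ} (hx : x ≠ 0) : 0 < norm3 x := by
  obtain ⟨i, hi⟩ := Function.ne_iff.mp hx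
  exact Real.sqrt_pos.mpr <| Finset.sum_pos' (fun j _ => sq_nonneg (x j))
    ⟨i, Finset.mem_univ i, sq_pos_of_ne_zero hi⟩

lemma norm3_smul_sub_smul_sq (a b : ℝ) (x y : Fin 3 → ℝ) :
    norm3 (a • x - b • y) ^ 2 = a ^ 2 * norm3 x ^ 2 + b ^ 2 * norm3 y ^ 2 - 2 * a * b * dot3 x y := by
  simp only [norm3_sq, dot3, Fin.sum_univ_three, Pi.sub_apply, Pi.smul_apply, smul_eq_mul]
  ring

lemma minner_comm (A B : Matrix (Fin 3) (Fin 3) ℝ) : minner A B = minner B A := by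
  rw [minner, minner, ← Matrix.trace_transpose, Matrix.transpose_mul, Matrix.transpose_transpose]

lemma frob2_smul_sub_smul (a b : ℝ) (A B : Matrix (Fin 3) (Fin 3) ℝ) :
    frob2 (a • A - b • B) = a ^ 2 * frob2 A + b ^ 2 * frob2 B - 2 * a * b * minner A B := by
  have hBA := minner_comm B A
  simp only [frob2, minner] at hBA ⊢
  simp only [Matrix.transpose_sub, Matrix.transpose_smul, Matrix.sub_mul, Matrix.mul_sub,
    Matrix.smul_mul, Matrix.mul_smul, Matrix.trace_sub, Matrix.trace_smul, smul_eq_mul, hBA]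
  ring

lemma minner_projM {x y : Fin 3 → ℝ} (hx : x ≠ 0) (hy : y ≠ 0) :
    minner (projM x) (projM y) = 1 + dot3 x y ^ 2 / (norm3 x ^ 2 * norm3 y ^ 2) := by
  have hx2 := norm3_sq x
  have hy2 := norm3_sq y
  have hx0 := (norm3_pos hx).ne'
  have hy0 := (norm3_pos hy).ne'
  simp only [dot3, Fin.sum_univ_three] at hx2 hy2 ⊢
  simp only [minner, projM, Matrix.trace_fin_three, Matrix.mul_apply, Fin.sum_univ_three,
    Matrix.transpose_apply, Matrix.sub_apply, Matrix.one_apply, Matrix.smul_apply, Matrix.of_apply,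
    smul_eq_mul, ↓reduceIte, Fin.isValue, Fin.reduceEq, zero_ne_one, one_ne_zero]
  field_simp
  rw [hx2, hy2]
  ring

lemma frob2_projM {x : Fin 3 → ℝ} (hx : x ≠ 0) : frob2 (projM x) = 2 := by
  have h := minner_projM hx hx
  rw [← norm3_sq, ← sq, div_self (pow_ne_zero 2 (pow_ne_zero 2 (norm3_pos hx).ne'))] at h
  rw [frob2, ← minner, h]
  norm_num

theorem stmt4_general (γ : ℝ) (x y : Fin 3 → ℝ) (hx : x ≠ 0) (hy : y ≠ 0) :
    frob2 (sigmaM γ x - sigmaM γ y)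
      ≤ 2 * norm3 ((norm3 x ^ (γ/2)) • x - (norm3 y ^ (γ/2)) • y) ^ 2 := by
  have hr := norm3_pos hx
  have hs := norm3_pos hy
  rw [sigmaM, sigmaM, frob2_smul_sub_smul, frob2_projM hx, frob2_projM hy, minner_projM hx hy,
    norm3_smul_sub_smul_sq, Real.rpow_add hr, Real.rpow_add hs, Real.rpow_one, Real.rpow_one]
  set r := norm3 x
  set s := norm3 y
  set d := dot3 x y
  set p := r ^ (γ / 2)
  set q := s ^ (γ / 2)
  have gap : 2 * (p ^ 2 * r ^ 2 + q ^ 2 * s ^ 2 - 2 * p * q * d) - ((r * p) ^ 2 * 2 + (s * q) ^ 2 * 2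
      - 2 * (r * p) * (s * q) * (1 + d ^ 2 / (r ^ 2 * s ^ 2))) = 2 * p * q * (r * s - d) ^ 2 / (r * s) := by
    field_simp
    ring
  have hp : 0 ≤ p := Real.rpow_nonneg hr.le _
  have hq : 0 ≤ q := Real.rpow_nonneg hs.le _
  have : 0 ≤ 2 * p * q * (r * s - d) ^ 2 / (r * s) := by positivity
  linarith

theorem stmt4 (γ : ℝ) (hγ : γ ∈ Set.Ioc (0:ℝ) 1) (x y : Fin 3 → ℝ) (hx : x ≠ 0) (hy : y ≠ 0) :
    frob2 (sigmaM γ x - sigmaM γ y)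
      ≤ 2 * norm3 ((norm3 x ^ (γ/2)) • x - (norm3 y ^ (γ/2)) • y) ^ 2 :=
  stmt4_general γ x y hx hy
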